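/- Let m ∈ ℕ₊, let φ : ℝ → ℝ be (m+1) times continuously differentiable, and let x₀ ∈ ℝ satisfy φ^{(m)}(x₀) ≠ 0. For q = (q_1,…,q_m) ∈ ℝ^m and step size 0 < h < 1, define T_m^{(x₀)}(q, h) = (2^m h^m φ^{(m)}(x₀))^{−1} Σ_{ν ∈ {−1,1}^m} (∏_{i=1}^m ν_i) φ(x₀ + h Σ_{i=1}^m ν_i q_i). Then |T_m^{(x₀)}(q, h) − ∏_{i=1}^m q_i| ≤ h · A^{m+1} · sup_{|t − x₀| ≤ A} |φ^{(m+1)}(t)| / ((m+1)! · |φ^{(m)}(x₀)|), where A = Σ_{i=1}^m |q_i|. -/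

import Mathlib

open scoped BigOperators
open Set

/-- The central-difference product approximator
`T_m^{(x₀)}(q, h) = (2^m h^m φ^{(m)}(x₀))⁻¹ Σ_{ν ∈ {−1,1}^m} (Π_i ν_i) φ(x₀ + h Σ_i ν_i q_i)`,
where sign vectors are encoded as `ν : Fin m → ℤˣ`. -/
lemma univ_intUnits : (Finset.univ : Finset ℤˣ) = {1, -1} := by
  ext ε
  simpa using Int.units_eq_one_or ε

lemma signPowSum_even (k : ℕ) (hk : Even k) :
    ∑ ε : ℤˣ, ((ε : ℤ) : ℝ) ^ (k + 1) = 0 := by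
  rw [univ_intUnits, Finset.sum_pair (by decide : (1 : ℤˣ) ≠ -1)]
  have : Odd (k + 1) := Even.add_one hk
  simp [this.neg_one_pow]

lemma signPowSum_odd (k : ℕ) (hk : Odd k) :
    ∑ ε : ℤˣ, ((ε : ℤ) : ℝ) ^ (k + 1) = 2 := by
  rw [univ_intUnits, Finset.sum_pair (by decide : (1 : ℤˣ) ≠ -1)]
  have : Even (k + 1) := hk.add_one
  simp [this.neg_one_pow]
  norm_num

lemma signsum_pow : ∀ (m : ℕ) (q : Fin m → ℝ) (j : ℕ), j ≤ m →
    ∑ ν : Fin m → ℤˣ, (∏ i, ((ν i : ℤ) : ℝ)) * (∑ i, ((ν i : ℤ) : ℝ) * q i) ^ j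
      = if j = m then 2 ^ m * (m.factorial : ℝ) * ∏ i, q i else 0 := by
  intro m
  induction m with
  | zero =>
    intro q j hj
    interval_cases j
    simp
  | succ m IH =>
    intro q j hj
    have hsum : ∑ ν : Fin (m+1) → ℤˣ,
        (∏ i, ((ν i : ℤ) : ℝ)) * (∑ i, ((ν i : ℤ) : ℝ) * q i) ^ j
        = ∑ p : ℤˣ × (Fin m → ℤˣ),
          (∏ i, (((Fin.consEquiv (fun _ => ℤˣ)) p i : ℤ) : ℝ)) *
            (∑ i, (((Fin.consEquiv (fun _ => ℤˣ)) p i : ℤ) : ℝ) * q i) ^ j :=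
      (Equiv.sum_comp (Fin.consEquiv (fun _ => ℤˣ))
        (fun ν => (∏ i, ((ν i : ℤ) : ℝ)) * (∑ i, ((ν i : ℤ) : ℝ) * q i) ^ j)).symm
    rw [hsum]
    rw [Fintype.sum_prod_type]
    simp only [Fin.consEquiv_apply, Fin.prod_univ_succ, Fin.sum_univ_succ,
      Fin.cons_zero, Fin.cons_succ]
    have step1 : ∀ (ε : ℤˣ) (ν : Fin m → ℤˣ),
        (((ε:ℤ):ℝ) * ∏ i, ((ν i : ℤ):ℝ)) *
            (((ε:ℤ):ℝ) * q 0 + ∑ i, ((ν i:ℤ):ℝ) * q i.succ) ^ j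
        = ∑ k ∈ Finset.range (j+1), ((ε:ℤ):ℝ)^(k+1) *
            ((j.choose k : ℝ) * q 0 ^ k *
              ((∏ i, ((ν i : ℤ):ℝ)) * (∑ i, ((ν i:ℤ):ℝ) * q i.succ)^(j-k))) := by
      intro ε ν
      rw [add_pow, Finset.mul_sum]
      refine Finset.sum_congr rfl fun k hk => ?_
      rw [mul_pow]
      ring
    simp_rw [step1]
    have swap : (∑ ε : ℤˣ, ∑ ν : Fin m → ℤˣ, ∑ k ∈ Finset.range (j+1),
        ((ε:ℤ):ℝ)^(k+1) * ((j.choose k : ℝ) * q 0 ^ k *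
          ((∏ i, ((ν i : ℤ):ℝ)) * (∑ i, ((ν i:ℤ):ℝ) * q i.succ)^(j-k))))
        = ∑ k ∈ Finset.range (j+1), ∑ ε : ℤˣ, ∑ ν : Fin m → ℤˣ,
        ((ε:ℤ):ℝ)^(k+1) * ((j.choose k : ℝ) * q 0 ^ k *
          ((∏ i, ((ν i : ℤ):ℝ)) * (∑ i, ((ν i:ℤ):ℝ) * q i.succ)^(j-k))) :=
      (Finset.sum_congr rfl fun ε _ => Finset.sum_comm).trans Finset.sum_comm
    rw [swap]
    have step2 : ∀ k ∈ Finset.range (j+1),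
        (∑ ε : ℤˣ, ∑ ν : Fin m → ℤˣ,
          ((ε:ℤ):ℝ)^(k+1) * ((j.choose k : ℝ) * q 0 ^ k *
            ((∏ i, ((ν i : ℤ):ℝ)) * (∑ i, ((ν i:ℤ):ℝ) * q i.succ)^(j-k))))
        = (∑ ε : ℤˣ, ((ε:ℤ):ℝ)^(k+1)) * ((j.choose k : ℝ) * q 0 ^ k *
            (∑ ν : Fin m → ℤˣ,
              (∏ i, ((ν i : ℤ):ℝ)) * (∑ i, ((ν i:ℤ):ℝ) * q i.succ)^(j-k))) := by
      intro k hk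
      rw [← Finset.sum_mul_sum]
      congr 1
      exact (Finset.mul_sum _ _ _).symm
    rw [Finset.sum_congr rfl step2]
    rcases Nat.eq_or_lt_of_le hj with hje | hjlt
    · -- j = m + 1
      subst hje
      rw [if_pos rfl]
      rw [Finset.sum_eq_single_of_mem 1 (by simp)]
      · rw [signPowSum_odd 1 odd_one,
          IH (fun i => q i.succ) (m + 1 - 1) (by omega), if_pos (by omega)]
        have : (m + 1 - 1) = m := by omega
        push_cast [Nat.choose_one_right, Nat.factorial_succ]
        ring
      · intro k hk hkne
        rcases Nat.even_or_odd k with hke | hko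
        · rw [signPowSum_even k hke, zero_mul]
        · have hkpos : 1 ≤ k := hko.pos
          rw [IH (fun i => q i.succ) (m + 1 - k) (by omega),
            if_neg (by simp only [Finset.mem_range] at hk; omega)]
          ring
    · -- j ≤ m
      rw [if_neg (by omega)]
      refine Finset.sum_eq_zero fun k hk => ?_
      rcases Nat.even_or_odd k with hke | hko
      · rw [signPowSum_even k hke, zero_mul]
      · have hk1 : 1 ≤ k := hko.pos
        rw [IH (fun i => q i.succ) (j - k) (by omega),
          if_neg (by simp only [Finset.mem_range] at hk; omega)]
        ring

lemma iterWithin {f : ℝ → ℝ} {n : ℕ∞} (hf : ContDiff ℝ n f) {j : ℕ}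
    (hj : (j : ℕ∞) ≤ n) {s : Set ℝ} (hs : UniqueDiffOn ℝ s) {x : ℝ} (hx : x ∈ s) :
    iteratedDerivWithin j f s x = iteratedDeriv j f x := by
  rw [iteratedDerivWithin_eq_iteratedFDerivWithin, iteratedDeriv_eq_iteratedFDeriv]
  congr 1
  exact (((contDiff_iff_ftaylorSeries.mp hf).hasFTaylorSeriesUpToOn
    s).eq_iteratedFDerivWithin_of_uniqueDiffOn (by exact_mod_cast hj) hs hx).symm

lemma iteratedDeriv_reflect (f : ℝ → ℝ) (c : ℝ) (j : ℕ) (a : ℝ) :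
    iteratedDeriv j (fun t => f (c - t)) a = (-1 : ℝ) ^ j * iteratedDeriv j f (c - a) := by
  have h2 := iteratedDeriv_comp_neg j (fun z : ℝ => f (c + z)) a
  simp only [smul_eq_mul] at h2
  have h3 := congrFun (iteratedDeriv_comp_const_add j f c) (-a)
  calc iteratedDeriv j (fun t => f (c - t)) a
      = iteratedDeriv j (fun t : ℝ => f (c + (-t))) a := by
        rw [show (fun t : ℝ => f (c - t)) = (fun t : ℝ => f (c + (-t))) from
          funext fun t => by rw [sub_eq_add_neg]]
    _ = (-1:ℝ)^j * iteratedDeriv j (fun z : ℝ => f (c + z)) (-a) := h2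
    _ = (-1:ℝ)^j * iteratedDeriv j f (c + (-a)) := by rw [h3]
    _ = (-1:ℝ)^j * iteratedDeriv j f (c - a) := by rw [← sub_eq_add_neg]

lemma taylor_bound_pos (n : ℕ) (f : ℝ → ℝ) (hf : ContDiff ℝ ((n+1 : ℕ) : ℕ∞) f)
    (x₀ s A M : ℝ) (hs : 0 < s) (hsA : s ≤ A)
    (hM : ∀ t ∈ Set.Icc (x₀ - A) (x₀ + A), |iteratedDeriv (n+1) f t| ≤ M) :
    |f (x₀ + s) - ∑ j ∈ Finset.range (n+1),
        iteratedDeriv j f x₀ * s ^ j / (j.factorial : ℝ)|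
      ≤ M * s ^ (n+1) / ((n+1).factorial : ℝ) := by
  set x := x₀ + s with hxdef
  have hx : x₀ < x := by simp [hxdef]; linarith
  have hUD : UniqueDiffOn ℝ (Icc x₀ x) := uniqueDiffOn_Icc hx
  have hfn : ContDiffOn ℝ n f (Icc x₀ x) :=
    (hf.of_le (by exact_mod_cast Nat.le_succ n)).contDiffOn
  have heq : ∀ j : ℕ, j ≤ n + 1 → ∀ y ∈ Icc x₀ x,
      iteratedDerivWithin j f (Icc x₀ x) y = iteratedDeriv j f y := by
    intro j hj y hy
    exact iterWithin hf (by exact_mod_cast hj) hUD hy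
  have hf' : DifferentiableOn ℝ (iteratedDerivWithin n f (Icc x₀ x)) (Ioo x₀ x) := by
    intro y hy
    have hdiff : DifferentiableAt ℝ (iteratedDeriv n f) y :=
      (hf.differentiable_iteratedDeriv n (by exact_mod_cast Nat.lt_succ_self n)) y
    refine (hdiff.differentiableWithinAt).congr (fun z hz => ?_) ?_
    · exact heq n (Nat.le_succ n) z (Ioo_subset_Icc_self hz)
    · exact heq n (Nat.le_succ n) y (Ioo_subset_Icc_self hy)
  obtain ⟨x', hx', hR⟩ := taylor_mean_remainder_lagrange hx.ne
    (by rwa [uIcc_of_le hx.le]) (by rwa [uIcc_of_le hx.le, uIoo_of_lt hx])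
  rw [uIoo_of_lt hx] at hx'
  rw [uIcc_of_le hx.le] at hR
  have htay : taylorWithinEval f n (Icc x₀ x) x₀ x
      = ∑ j ∈ Finset.range (n+1), iteratedDeriv j f x₀ * s ^ j / (j.factorial : ℝ) := by
    rw [taylor_within_apply]
    refine Finset.sum_congr rfl fun k hk => ?_
    rw [heq k (le_of_lt (by simpa using hk)) x₀ (left_mem_Icc.mpr hx.le)]
    have : x - x₀ = s := by simp [hxdef]
    rw [this, smul_eq_mul]
    ring
  rw [← htay, hR, heq (n+1) le_rfl x' (Ioo_subset_Icc_self hx')]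
  have hxmem : x' ∈ Icc (x₀ - A) (x₀ + A) := by
    constructor
    · have := hx'.1; linarith
    · have := hx'.2; simp [hxdef] at this; linarith
  have hsn : (0:ℝ) < s ^ (n+1) := pow_pos hs _
  have : x - x₀ = s := by simp [hxdef]
  rw [this, abs_div, abs_mul, abs_pow, abs_of_pos hs, Nat.abs_cast]
  gcongr
  exact hM x' hxmem

lemma taylor_bound (n : ℕ) (f : ℝ → ℝ) (hf : ContDiff ℝ ((n+1 : ℕ) : ℕ∞) f)
    (x₀ s A M : ℝ) (hsA : |s| ≤ A)
    (hM : ∀ t ∈ Set.Icc (x₀ - A) (x₀ + A), |iteratedDeriv (n+1) f t| ≤ M) :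
    |f (x₀ + s) - ∑ j ∈ Finset.range (n+1),
        iteratedDeriv j f x₀ * s ^ j / (j.factorial : ℝ)|
      ≤ M * |s| ^ (n+1) / ((n+1).factorial : ℝ) := by
  have habs := abs_nonneg s
  have hM0 : 0 ≤ M := le_trans (abs_nonneg _)
    (hM x₀ ⟨by linarith, by linarith⟩)
  rcases lt_trichotomy s 0 with hneg | hzero | hpos
  · -- s < 0 : reflection
    have hgc : ContDiff ℝ ((n+1 : ℕ) : ℕ∞) (fun t => f (2*x₀ - t)) :=
      hf.comp (contDiff_const.sub contDiff_id)
    have hMg : ∀ t ∈ Set.Icc (x₀ - A) (x₀ + A),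
        |iteratedDeriv (n+1) (fun t => f (2*x₀ - t)) t| ≤ M := by
      intro t ht
      rw [iteratedDeriv_reflect f (2*x₀) (n+1) t, abs_mul, abs_pow, abs_neg,
        abs_one, one_pow, one_mul]
      exact hM (2*x₀ - t) ⟨by obtain ⟨h1, h2⟩ := ht; linarith,
        by obtain ⟨h1, h2⟩ := ht; linarith⟩
    have hsA' : -s ≤ A := by rw [abs_of_neg hneg] at hsA; exact hsA
    have key := taylor_bound_pos n (fun t => f (2*x₀ - t)) hgc x₀ (-s) A M
      (by linarith) hsA' hMg
    have e1 : (fun t => f (2*x₀ - t)) (x₀ + -s) = f (x₀ + s) := by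
      simp only []
      ring_nf
    have e2 : ∀ j ∈ Finset.range (n+1),
        iteratedDeriv j (fun t => f (2*x₀ - t)) x₀ * (-s) ^ j / (j.factorial : ℝ)
          = iteratedDeriv j f x₀ * s ^ j / (j.factorial : ℝ) := by
      intro j _
      rw [iteratedDeriv_reflect f (2*x₀) j x₀]
      have : 2*x₀ - x₀ = x₀ := by ring
      rw [this]
      rw [show (-1:ℝ)^j * iteratedDeriv j f x₀ * (-s)^j
          = iteratedDeriv j f x₀ * ((-1) * (-s))^j by rw [mul_pow]; ring]
      norm_num
    rw [show f (2*x₀ - (x₀ + -s)) = f (x₀ + s) from e1, Finset.sum_congr rfl e2] at key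
    have e3 : (-s) ^ (n+1) = |s| ^ (n+1) := by rw [abs_of_neg hneg]
    rw [e3] at key
    exact key
  · subst hzero
    have hsum : ∑ j ∈ Finset.range (n+1),
        iteratedDeriv j f x₀ * (0:ℝ) ^ j / (j.factorial : ℝ) = f x₀ := by
      rw [Finset.sum_eq_single_of_mem 0 (by simp)]
      · simp
      · intro j _ hj
        simp [zero_pow hj]
    rw [hsum]
    simp
  · have key := taylor_bound_pos n f hf x₀ s A M hpos
      (by rw [abs_of_pos hpos] at hsA; exact hsA) hM
    rw [abs_of_pos hpos]
    exact key

/-- The central-difference product approximator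
`T_m^{(x₀)}(q, h) = (2^m h^m φ^{(m)}(x₀))⁻¹ Σ_{ν ∈ {−1,1}^m} (Π_i ν_i) φ(x₀ + h Σ_i ν_i q_i)`,
where sign vectors are encoded as `ν : Fin m → ℤˣ`. -/
noncomputable def centralDiffProd (φ : ℝ → ℝ) (m : ℕ) (x₀ : ℝ) (q : Fin m → ℝ)
    (h : ℝ) : ℝ :=
  (2 ^ m * h ^ m * iteratedDeriv m φ x₀)⁻¹ *
    ∑ ν : Fin m → ℤˣ,
      (∏ i, ((ν i : ℤ) : ℝ)) * φ (x₀ + h * ∑ i, ((ν i : ℤ) : ℝ) * q i)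

/-- **Lemma B.3**: for `φ ∈ C^{m+1}` with `φ^{(m)}(x₀) ≠ 0`, `0 < h < 1` and
`A = Σ_i |q_i|`,
`|T_m^{(x₀)}(q,h) − Π_i q_i| ≤ h A^{m+1} sup_{|t−x₀| ≤ A} |φ^{(m+1)}(t)| / ((m+1)! |φ^{(m)}(x₀)|)`. -/
theorem centralDiffProd_error (m : ℕ) (hm : 0 < m) (φ : ℝ → ℝ)
    (hφ : ContDiff ℝ ((m : ℕ∞) + 1) φ) (x₀ : ℝ) (hx₀ : iteratedDeriv m φ x₀ ≠ 0)
    (q : Fin m → ℝ) (h : ℝ) (hh0 : 0 < h) (hh1 : h < 1) :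
    |centralDiffProd φ m x₀ q h - ∏ i, q i| ≤
      h * (∑ i, |q i|) ^ (m + 1) *
        sSup ((fun t => |iteratedDeriv (m + 1) φ t|) ''
          Set.Icc (x₀ - ∑ i, |q i|) (x₀ + ∑ i, |q i|)) /
        (((m + 1).factorial : ℝ) * |iteratedDeriv m φ x₀|) := by
  classical
  have hφ' : ContDiff ℝ ((m+1 : ℕ) : ℕ∞) φ := by exact_mod_cast hφ
  set A := ∑ i, |q i| with hAdef
  have hA0 : 0 ≤ A := Finset.sum_nonneg fun i _ => abs_nonneg _
  set D := iteratedDeriv m φ x₀ with hDdef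
  set M := sSup ((fun t => |iteratedDeriv (m + 1) φ t|) '' Set.Icc (x₀ - A) (x₀ + A))
    with hMdef
  have hcont : Continuous fun t => |iteratedDeriv (m+1) φ t| :=
    (ContDiff.continuous_iteratedDeriv (m+1) hφ' (by exact_mod_cast le_rfl)).abs
  have hM : ∀ t ∈ Set.Icc (x₀ - A) (x₀ + A), |iteratedDeriv (m+1) φ t| ≤ M := fun t ht =>
    le_csSup ((isCompact_Icc.image hcont).bddAbove) ⟨t, ht, rfl⟩
  have hx₀mem : x₀ ∈ Set.Icc (x₀ - A) (x₀ + A) := ⟨by linarith, by linarith⟩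
  have hM0 : 0 ≤ M := le_trans (abs_nonneg _) (hM x₀ hx₀mem)
  have hFne : ((m+1).factorial : ℝ) ≠ 0 := Nat.cast_ne_zero.mpr (Nat.factorial_ne_zero _)
  have hmFne : ((m).factorial : ℝ) ≠ 0 := Nat.cast_ne_zero.mpr (Nat.factorial_ne_zero _)
  set R : (Fin m → ℤˣ) → ℝ := fun ν =>
    φ (x₀ + h * ∑ i, ((ν i : ℤ) : ℝ) * q i)
      - ∑ j ∈ Finset.range (m+1),
          iteratedDeriv j φ x₀ * (h * ∑ i, ((ν i : ℤ) : ℝ) * q i) ^ j / (j.factorial : ℝ)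
    with hRdef
  have hu : ∀ ν : Fin m → ℤˣ, |∑ i, ((ν i : ℤ) : ℝ) * q i| ≤ A := by
    intro ν
    refine (Finset.abs_sum_le_sum_abs _ _).trans ?_
    rw [hAdef]
    refine Finset.sum_le_sum fun i _ => ?_
    rw [abs_mul]
    rcases Int.units_eq_one_or (ν i) with h1 | h1 <;> simp [h1]
  have huh' : ∀ ν : Fin m → ℤˣ, |h * ∑ i, ((ν i : ℤ) : ℝ) * q i| ≤ h * A := by
    intro ν
    rw [abs_mul, abs_of_pos hh0]
    exact mul_le_mul_of_nonneg_left (hu ν) hh0.le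
  have huh : ∀ ν : Fin m → ℤˣ, |h * ∑ i, ((ν i : ℤ) : ℝ) * q i| ≤ A := by
    intro ν
    have h1 := huh' ν
    have h2 : h * A ≤ A := by nlinarith
    linarith
  have hR : ∀ ν, |R ν| ≤ M * (h*A)^(m+1) / ((m+1).factorial : ℝ) := by
    intro ν
    have step := taylor_bound m φ hφ' x₀ (h * ∑ i, ((ν i : ℤ) : ℝ) * q i) A M (huh ν) hM
    refine step.trans ?_
    have hpow : |h * ∑ i, ((ν i : ℤ) : ℝ) * q i| ^ (m+1) ≤ (h*A)^(m+1) :=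
      pow_le_pow_left₀ (abs_nonneg _) (huh' ν) _
    have hF : (0:ℝ) < ((m+1).factorial : ℝ) := by positivity
    exact div_le_div_of_nonneg_right (mul_le_mul_of_nonneg_left hpow hM0) hF.le
  have key : ∑ ν : Fin m → ℤˣ,
        (∏ i, ((ν i : ℤ) : ℝ)) * φ (x₀ + h * ∑ i, ((ν i : ℤ) : ℝ) * q i)
      = 2 ^ m * h ^ m * D * ∏ i, q i
        + ∑ ν : Fin m → ℤˣ, (∏ i, ((ν i : ℤ) : ℝ)) * R ν := by
    have hsplit : ∀ ν : Fin m → ℤˣ,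
        (∏ i, ((ν i : ℤ) : ℝ)) * φ (x₀ + h * ∑ i, ((ν i:ℤ):ℝ) * q i)
        = (∑ j ∈ Finset.range (m+1), (∏ i, ((ν i:ℤ):ℝ)) *
            (iteratedDeriv j φ x₀ * (h * ∑ i, ((ν i:ℤ):ℝ) * q i) ^ j / (j.factorial : ℝ)))
          + (∏ i, ((ν i:ℤ):ℝ)) * R ν := by
      intro ν
      rw [hRdef]
      simp only []
      rw [← Finset.mul_sum]
      ring
    rw [Finset.sum_congr rfl (fun ν _ => hsplit ν), Finset.sum_add_distrib]
    congr 1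
    rw [Finset.sum_comm]
    have hterm : ∀ j ∈ Finset.range (m+1),
        (∑ ν : Fin m → ℤˣ, (∏ i, ((ν i:ℤ):ℝ)) *
          (iteratedDeriv j φ x₀ * (h * ∑ i, ((ν i:ℤ):ℝ) * q i) ^ j / (j.factorial : ℝ)))
        = (iteratedDeriv j φ x₀ * h ^ j / (j.factorial : ℝ)) *
            (if j = m then 2 ^ m * (m.factorial : ℝ) * ∏ i, q i else 0) := by
      intro j hj
      rw [← signsum_pow m q j (Nat.lt_succ_iff.mp (Finset.mem_range.mp hj)), Finset.mul_sum]
      refine Finset.sum_congr rfl fun ν _ => ?_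
      rw [mul_pow]
      ring
    rw [Finset.sum_congr rfl hterm]
    rw [Finset.sum_eq_single_of_mem m (by simp)]
    · rw [if_pos rfl]
      field_simp
      ring
    · intro j _ hjm
      rw [if_neg hjm, mul_zero]
  have hX : (2:ℝ) ^ m * h ^ m * D ≠ 0 :=
    mul_ne_zero (mul_ne_zero (pow_ne_zero _ two_ne_zero) (pow_ne_zero _ hh0.ne')) hx₀
  have hdiff : centralDiffProd φ m x₀ q h - ∏ i, q i
      = (2 ^ m * h ^ m * D)⁻¹ * ∑ ν : Fin m → ℤˣ, (∏ i, ((ν i:ℤ):ℝ)) * R ν := by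
    simp only [centralDiffProd, ← hDdef]
    rw [key]
    field_simp
    ring
  rw [hdiff]
  have hEbound : |∑ ν : Fin m → ℤˣ, (∏ i, ((ν i:ℤ):ℝ)) * R ν|
      ≤ 2 ^ m * (M * (h*A)^(m+1) / ((m+1).factorial : ℝ)) := by
    refine (Finset.abs_sum_le_sum_abs _ _).trans ?_
    have hbd : ∀ ν : Fin m → ℤˣ, |(∏ i, ((ν i:ℤ):ℝ)) * R ν|
        ≤ M * (h*A)^(m+1) / ((m+1).factorial : ℝ) := by
      intro ν
      rw [abs_mul]
      have hprod : |∏ i, ((ν i:ℤ):ℝ)| = 1 := by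
        rw [Finset.abs_prod]
        refine Finset.prod_eq_one fun i _ => ?_
        rcases Int.units_eq_one_or (ν i) with h1 | h1 <;> simp [h1]
      rw [hprod, one_mul]
      exact hR ν
    refine (Finset.sum_le_sum fun ν _ => hbd ν).trans ?_
    rw [Finset.sum_const, Finset.card_univ, nsmul_eq_mul]
    have hcard : Fintype.card (Fin m → ℤˣ) = 2 ^ m := by
      rw [Fintype.card_fun, Fintype.card_units_int, Fintype.card_fin]
    rw [hcard]
    push_cast
    exact le_rfl
  have habsD : |D| ≠ 0 := abs_ne_zero.mpr hx₀
  have hDpos : 0 < |D| := abs_pos.mpr hx₀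
  calc |(2 ^ m * h ^ m * D)⁻¹ * ∑ ν : Fin m → ℤˣ, (∏ i, ((ν i:ℤ):ℝ)) * R ν|
      = ((2:ℝ) ^ m * h ^ m * |D|)⁻¹ * |∑ ν : Fin m → ℤˣ, (∏ i, ((ν i:ℤ):ℝ)) * R ν| := by
        rw [abs_mul, abs_inv, abs_mul, abs_mul, abs_pow, abs_pow, abs_two, abs_of_pos hh0]
    _ ≤ ((2:ℝ) ^ m * h ^ m * |D|)⁻¹ * (2 ^ m * (M * (h*A)^(m+1) / ((m+1).factorial : ℝ))) :=
        mul_le_mul_of_nonneg_left hEbound (by positivity)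
    _ = h * A ^ (m+1) * M / (((m+1).factorial : ℝ) * |D|) := by
        rw [mul_pow]
        field_simp
        ring
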